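/- arXiv:1703.00081 — 2 statements merged into one kernel-verified Lean document; each statement's English description precedes it below -/
import Mathlib

section
/- Let φ₀(z) = (p−1 + b z²)^{−(1+iδ)/(p−1)} for z ∈ ℝ. Then φ₀ is differentiable on ℝ and for every z ∈ ℝ: −(1/2)·z·φ₀'(z) − ((1+iδ)/(p−1))·φ₀(z) + (1+iδ)·|φ₀(z)|^{p−1}·φ₀(z) = 0. -/
open Complex

/-- `x^w := exp(w · log x)` for a positive real base `x` and complex exponent `w`. -/
noncomputable def rcpow (x : ℝ) (w : ℂ) : ℂ := Complex.exp (w * Real.log x)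

/-- The blow-up profile `φ₀(z) = (p−1 + b z²)^{−(1+iδ)/(p−1)}`. -/
noncomputable def phi0 (p δ b : ℝ) (z : ℝ) : ℂ :=
  rcpow (p - 1 + b * z ^ 2) (-(1 + Complex.I * δ) / (p - 1))

/-!
With `A(z) = p − 1 + b z²` and `c = (1+iδ)/(p−1)` we have `φ₀ = A^{-c}`, so
`φ₀' = −c (A'/A) φ₀ = −2cbz φ₀ / A` and `|φ₀|^{p−1} = A^{-1}`. The left-hand side of the
profile equation is then `c φ₀ (b z² − A + (p − 1)) / A = 0`.
-/

theorem HasDerivAt.rcpow {f : ℝ → ℝ} {f' x : ℝ} (hf : HasDerivAt f f' x) (hx : f x ≠ 0)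
    (w : ℂ) :
    HasDerivAt (fun t => rcpow (f t) w) (w * (f' / f x : ℝ) * rcpow (f x) w) x := by
  unfold _root_.rcpow
  convert ((hf.log hx).ofReal_comp.const_mul w).cexp using 1
  ring

theorem norm_rcpow_of_pos {x : ℝ} (hx : 0 < x) (w : ℂ) : ‖rcpow x w‖ = x ^ w.re := by
  rw [rcpow, Complex.norm_exp, Complex.re_mul_ofReal, Real.rpow_def_of_pos hx, mul_comm]

section Profile

variable {p b : ℝ} (δ : ℝ)

theorem profile_base_pos (hp : 1 < p) (hb : 0 ≤ b) (z : ℝ) : 0 < p - 1 + b * z ^ 2 := by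
  nlinarith [mul_nonneg hb (sq_nonneg z)]

theorem hasDerivAt_phi0 (hp : 1 < p) (hb : 0 ≤ b) (z : ℝ) :
    HasDerivAt (phi0 p δ b)
      (-(1 + I * δ) / (p - 1) * (b * (2 * z) / (p - 1 + b * z ^ 2) : ℝ) * phi0 p δ b z) z := by
  have hA : HasDerivAt (fun t : ℝ => p - 1 + b * t ^ 2) (b * (2 * z)) z := by
    simpa using ((hasDerivAt_pow 2 z).const_mul b).const_add (p - 1)
  exact hA.rcpow (profile_base_pos hp hb z).ne' _

theorem norm_phi0_rpow (hp : 1 < p) (hb : 0 ≤ b) (z : ℝ) :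
    ‖phi0 p δ b z‖ ^ (p - 1) = (p - 1 + b * z ^ 2)⁻¹ := by
  have hA := profile_base_pos hp hb z
  have hp1 : p - 1 ≠ 0 := by linarith
  have hre : (-(1 + I * δ) / (p - 1 : ℂ)).re = -1 / (p - 1) := by
    rw [← Complex.ofReal_one, ← Complex.ofReal_sub, Complex.div_ofReal_re]
    simp
  rw [phi0, norm_rcpow_of_pos hA, hre, ← Real.rpow_mul hA.le, div_mul_cancel₀ _ hp1,
    Real.rpow_neg_one]

theorem phi0_profile_eq (hp : 1 < p) (hb : 0 ≤ b) (z : ℝ) :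
    -(1 / 2 : ℂ) * (z : ℂ) * deriv (phi0 p δ b) z
      - ((1 + I * δ) / (p - 1)) * phi0 p δ b z
      + (1 + I * δ) * ((‖phi0 p δ b z‖ ^ (p - 1) : ℝ) : ℂ) * phi0 p δ b z = 0 := by
  have hA : ((p - 1 + b * z ^ 2 : ℝ) : ℂ) ≠ 0 := by exact_mod_cast (profile_base_pos hp hb z).ne'
  have hp1 : ((p - 1 : ℝ) : ℂ) ≠ 0 := by exact_mod_cast (show p - 1 ≠ 0 by linarith)
  rw [norm_phi0_rpow δ hp hb, (hasDerivAt_phi0 δ hp hb z).deriv]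
  push_cast at hA hp1 ⊢
  linear_combination (1 + I * δ) * phi0 p δ b z *
    ((p - 1 : ℂ)⁻¹ * mul_inv_cancel₀ hA - (p - 1 + b * z ^ 2 : ℂ)⁻¹ * mul_inv_cancel₀ hp1)

end Profile

theorem stmt3_general (p δ b : ℝ) (hp : 1 < p)
    (hb : b = (p - 1) ^ 2 / (8 * Real.sqrt (p * (p + 1)))) :
    Differentiable ℝ (phi0 p δ b) ∧
    ∀ z : ℝ,
      -(1 / 2 : ℂ) * (z : ℂ) * deriv (phi0 p δ b) z
        - ((1 + Complex.I * δ) / (p - 1)) * phi0 p δ b z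
        + (1 + Complex.I * δ) * ((‖phi0 p δ b z‖ ^ (p - 1) : ℝ) : ℂ) *
            phi0 p δ b z = 0 := by
  have hb0 : 0 ≤ b := hb ▸ by positivity
  exact ⟨fun z => (hasDerivAt_phi0 δ hp hb0 z).differentiableAt, phi0_profile_eq δ hp hb0⟩

/-- in the critical case `δ = √p`, with `b = (p−1)²/(8√(p(p+1)))`,
the profile `φ₀` is differentiable on `ℝ` and satisfies the profile ODE
`−(1/2)·z·φ₀'(z) − ((1+iδ)/(p−1))·φ₀(z) + (1+iδ)·|φ₀(z)|^{p−1}·φ₀(z) = 0`. -/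
theorem stmt3 (p δ b : ℝ) (hp : 1 < p) (hδ : δ = Real.sqrt p)
    (hb : b = (p - 1) ^ 2 / (8 * Real.sqrt (p * (p + 1)))) :
    Differentiable ℝ (phi0 p δ b) ∧
    ∀ z : ℝ,
      -(1 / 2 : ℂ) * (z : ℂ) * deriv (phi0 p δ b) z
        - ((1 + Complex.I * δ) / (p - 1)) * phi0 p δ b z
        + (1 + Complex.I * δ) * ((‖phi0 p δ b z‖ ^ (p - 1) : ℝ) : ℂ) *
            phi0 p δ b z = 0 :=
  stmt3_general p δ b hp hb
end

section
/- Let 𝓛̃ be the ℝ-linear operator acting on C² functions v : ℝ → ℂ by (𝓛̃v)(y) = v''(y) − (y/2)·v'(y) + (1+iδ)·Re v(y). Then for every m ∈ ℕ: 𝓛̃((1+iδ)·h_m) = (1 − m/2)·(1+iδ)·h_m and 𝓛̃(i·h_m) = −(m/2)·i·h_m, where h_m is viewed as the complex-valued polynomial function y ↦ h_m(y). -/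
open Complex

/-- The `m`-th rescaled Hermite polynomial
`h_m(y) = Σ_{n=0}^{⌊m/2⌋} m!/(n!(m−2n)!)·(−1)^n·y^{m−2n}`. -/
noncomputable def hpoly (m : ℕ) (y : ℝ) : ℝ :=
  ∑ n ∈ Finset.range (m / 2 + 1),
    ((Nat.factorial m : ℝ) / ((Nat.factorial n : ℝ) * (Nat.factorial (m - 2 * n) : ℝ))) *
      (-1 : ℝ) ^ n * y ^ (m - 2 * n)

/-- The ℝ-linear operator `(𝓛̃v)(y) = v''(y) − (y/2)·v'(y) + (1+iδ)·Re v(y)`. -/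
noncomputable def Ltilde (δ : ℝ) (v : ℝ → ℂ) (y : ℝ) : ℂ :=
  deriv (deriv v) y - ((y / 2 : ℝ) : ℂ) * deriv v y + (1 + Complex.I * δ) * ((v y).re : ℂ)

/-
`h_m` solves the rescaled Hermite equation `h'' - (y/2) h' + (m/2) h = 0`: on the monomial
`c_n y^(m-2n)` of `h_m` the operator produces `n c_n y^(m-2n) - (n+1) c_(n+1) y^(m-2n-2)`, because
`(m-2n)(m-2n-1) c_n = -(n+1) c_(n+1)`, and these contributions telescope to zero. Since `h_m` is
real, `Re((1+iδ) h_m) = h_m` and `Re(i h_m) = 0`, so both eigenvalue identities reduce to that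
equation.
-/

open Finset
open scoped Nat

/-- `m!/(m-2n)!` is written as a descending factorial, so that the coefficient vanishes for
`2n > m` instead of picking up the junk value of truncated subtraction. -/
noncomputable def hermiteCoeff (m n : ℕ) : ℝ := (-1) ^ n * m.descFactorial (2 * n) / n !

lemma hermiteCoeff_eq_zero {m n : ℕ} (h : m < 2 * n) : hermiteCoeff m n = 0 := by
  simp [hermiteCoeff, Nat.descFactorial_eq_zero_iff_lt.2 h]

lemma succ_mul_hermiteCoeff_succ (m n : ℕ) :
    ((n : ℝ) + 1) * hermiteCoeff m (n + 1)
      = -(((m - 2 * n : ℕ) : ℝ) * ((m - 2 * n - 1 : ℕ) : ℝ) * hermiteCoeff m n) := by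
  have hdesc : m.descFactorial (2 * (n + 1))
      = (m - 2 * n - 1) * ((m - 2 * n) * m.descFactorial (2 * n)) := by
    rw [show 2 * (n + 1) = 2 * n + 1 + 1 by ring, Nat.descFactorial_succ, Nat.descFactorial_succ,
      Nat.sub_sub]
  simp only [hermiteCoeff, hdesc, Nat.factorial_succ]
  push_cast
  field_simp
  ring

lemma hpoly_eq_sum (m : ℕ) (y : ℝ) :
    hpoly m y = ∑ n ∈ range (m / 2 + 1), hermiteCoeff m n * y ^ (m - 2 * n) := by
  refine sum_congr rfl fun n hn => ?_
  have h2n : 2 * n ≤ m := by have := mem_range.1 hn; omega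
  have hfact : ((m - 2 * n)! : ℝ) * m.descFactorial (2 * n) = m ! := by
    exact_mod_cast Nat.factorial_mul_descFactorial h2n
  rw [hermiteCoeff, ← hfact]
  field_simp

lemma hasDerivAt_sum_mul_pow (s : Finset ℕ) (a : ℕ → ℝ) (k : ℕ → ℕ) (y : ℝ) :
    HasDerivAt (fun y => ∑ n ∈ s, a n * y ^ k n) (∑ n ∈ s, a n * k n * y ^ (k n - 1)) y :=
  HasDerivAt.fun_sum fun n _ => by
    simpa [mul_assoc] using (hasDerivAt_pow (k n) y).const_mul (a n)

lemma natCast_mul_pow_pred_mul_self (k : ℕ) (y : ℝ) :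
    (k : ℝ) * y ^ (k - 1) * y = k * y ^ k := by
  cases k with
  | zero => simp
  | succ k => simp [pow_succ, mul_assoc]

lemma hermite_operator_monomial (m n : ℕ) (y : ℝ) :
    hermiteCoeff m n * (m - 2 * n : ℕ) * (m - 2 * n - 1 : ℕ) * y ^ (m - 2 * n - 1 - 1)
        - y / 2 * (hermiteCoeff m n * (m - 2 * n : ℕ) * y ^ (m - 2 * n - 1))
        + m / 2 * (hermiteCoeff m n * y ^ (m - 2 * n))
      = n * hermiteCoeff m n * y ^ (m - 2 * n)
        - (n + 1 : ℕ) * hermiteCoeff m (n + 1) * y ^ (m - 2 * (n + 1)) := by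
  have hsecond : ((n + 1 : ℕ) : ℝ) * hermiteCoeff m (n + 1) * y ^ (m - 2 * (n + 1))
      = -(hermiteCoeff m n * (m - 2 * n : ℕ) * (m - 2 * n - 1 : ℕ)
          * y ^ (m - 2 * n - 1 - 1)) := by
    rw [Nat.cast_succ, succ_mul_hermiteCoeff_succ,
      show m - 2 * (n + 1) = m - 2 * n - 1 - 1 by omega]
    ring
  have hfirst : -(y / 2 * (hermiteCoeff m n * (m - 2 * n : ℕ) * y ^ (m - 2 * n - 1)))
        + m / 2 * (hermiteCoeff m n * y ^ (m - 2 * n))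
      = n * hermiteCoeff m n * y ^ (m - 2 * n) := by
    rcases le_or_gt (2 * n) m with h2n | h2n
    · have hpow := natCast_mul_pow_pred_mul_self (m - 2 * n) y
      rw [Nat.cast_sub h2n] at hpow ⊢
      push_cast at hpow ⊢
      linear_combination (-hermiteCoeff m n / 2) * hpow
    · simp [hermiteCoeff_eq_zero h2n]
  linear_combination hfirst + hsecond

theorem hpoly_ode (m : ℕ) (y : ℝ) :
    deriv (deriv (hpoly m)) y - y / 2 * deriv (hpoly m) y + m / 2 * hpoly m y = 0 := by
  set N := m / 2 + 1
  have hpoly_fun : hpoly m = fun y => ∑ n ∈ range N, hermiteCoeff m n * y ^ (m - 2 * n) :=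
    funext (hpoly_eq_sum m)
  have hderiv : deriv (hpoly m)
      = fun y => ∑ n ∈ range N, hermiteCoeff m n * (m - 2 * n : ℕ) * y ^ (m - 2 * n - 1) :=
    funext fun y => hpoly_fun ▸ (hasDerivAt_sum_mul_pow _ _ _ y).deriv
  have hderiv2 : deriv (deriv (hpoly m)) y = ∑ n ∈ range N,
      hermiteCoeff m n * (m - 2 * n : ℕ) * (m - 2 * n - 1 : ℕ) * y ^ (m - 2 * n - 1 - 1) := by
    rw [hderiv]
    exact (hasDerivAt_sum_mul_pow _ _ (fun n => m - 2 * n - 1) y).deriv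
  rw [hderiv2, hderiv, hpoly_fun, mul_sum, mul_sum, ← sum_sub_distrib, ← sum_add_distrib,
    sum_congr rfl fun n _ => hermite_operator_monomial m n y,
    sum_range_sub' (fun n => (n : ℝ) * hermiteCoeff m n * y ^ (m - 2 * n)),
    hermiteCoeff_eq_zero (show m < 2 * N by omega)]
  simp

lemma deriv_const_mul_ofReal (K : ℂ) {f : ℝ → ℝ} (hf : Differentiable ℝ f) :
    deriv (fun t => K * (f t : ℂ)) = fun t => K * ((deriv f t : ℝ) : ℂ) :=
  funext fun t => ((hf t).hasDerivAt.ofReal_comp.const_mul K).deriv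

lemma Ltilde_const_mul_ofReal (δ : ℝ) (K : ℂ) {f : ℝ → ℝ} (hf : ContDiff ℝ 2 f) (y : ℝ) :
    Ltilde δ (fun t => K * (f t : ℂ)) y
      = K * ((deriv (deriv f) y - y / 2 * deriv f y : ℝ) : ℂ)
        + (1 + I * δ) * (K.re * f y : ℝ) := by
  rw [Ltilde, deriv_const_mul_ofReal K (hf.differentiable two_ne_zero),
    deriv_const_mul_ofReal K hf.differentiable_deriv_two, re_mul_ofReal]
  push_cast
  ring

lemma contDiff_hpoly (m : ℕ) : ContDiff ℝ 2 (hpoly m) := by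
  unfold hpoly
  fun_prop

/-- for every `m`, `𝓛̃((1+iδ)h_m) = (1 − m/2)·(1+iδ)h_m` and
`𝓛̃(i·h_m) = −(m/2)·i·h_m`. -/
theorem stmt4 (δ : ℝ) (m : ℕ) (y : ℝ) :
    Ltilde δ (fun t => (1 + Complex.I * δ) * ((hpoly m t : ℝ) : ℂ)) y
      = (1 - (m : ℂ) / 2) * ((1 + Complex.I * δ) * ((hpoly m y : ℝ) : ℂ)) ∧
    Ltilde δ (fun t => Complex.I * ((hpoly m t : ℝ) : ℂ)) y
      = -((m : ℂ) / 2) * (Complex.I * ((hpoly m y : ℝ) : ℂ)) := by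
  have hode : deriv (deriv (hpoly m)) y - y / 2 * deriv (hpoly m) y = -(m / 2 * hpoly m y) := by
    linarith [hpoly_ode m y]
  have hre : (1 + I * δ).re = 1 := by simp
  simp only [Ltilde_const_mul_ofReal δ _ (contDiff_hpoly m), hode, hre, I_re]
  constructor <;> push_cast <;> ring
end
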